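/- arXiv:1905.09956 — 6 statements merged into one kernel-verified Lean document; each statement's English description precedes it below -/
import Mathlib

section
/- Let (M, ℬ, μ, f) be a measure-preserving system and let {U_n}, {V_n} be nested sequences of measurable sets with V_n ⊆ U_n, μ(U_n) > 0 for each n, and μ(U_n \ V_n)/μ(U_n) → 0 as n → ∞. Then (for n large enough that μ(V_n) > 0) for every fixed K ≥ 1 and ℓ ≥ 1, μ_{U_n}(τ_{U_n}^{ℓ−1} ≤ K) − μ_{V_n}(τ_{V_n}^{ℓ−1} ≤ K) → 0 as n → ∞. Consequently, whenever the iterated limits α̂_ℓ^U = lim_{K→∞} lim_{n→∞} μ_{U_n}(τ_{U_n}^{ℓ−1} ≤ K) and α̂_ℓ^V = lim_{K→∞} lim_{n→∞} μ_{V_n}(τ_{V_n}^{ℓ−1} ≤ K) exist, they are equal. -/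
open MeasureTheory Filter Topology

/-- The number of returns to `U` within time `K`: `Σ_{i=1}^{K} 1_U(f^i x)`. -/
noncomputable def retCount {M : Type*} (f : M → M) (U : Set M) (K : ℕ) (x : M) : ℕ :=
  ∑ i ∈ Finset.Icc 1 K, U.indicator (fun _ => 1) (f^[i] x)

/-- The conditional probability `μ_U(τ_U^{ℓ-1} ≤ K)` of having at least `ℓ-1` returns
to `U` within time `K`, given being in `U`. -/
noncomputable def condRet {M : Type*} [MeasurableSpace M] (μ : Measure M)
    (f : M → M) (U : Set M) (K ℓ : ℕ) : ℝ :=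
  (μ (U ∩ {x | ℓ - 1 ≤ retCount f U K x})).toReal / (μ U).toReal

lemma retCount_mono {M : Type*} {f : M → M} {U V : Set M} (hVU : V ⊆ U) (K : ℕ) (x : M) :
    retCount f V K x ≤ retCount f U K x := by
  apply Finset.sum_le_sum
  intro i _
  by_cases h : f^[i] x ∈ V
  · simp [Set.indicator_apply, h, hVU h]
  · simp [Set.indicator_apply, h]

lemma key_measure_ineq {M : Type*} [MeasurableSpace M] (μ : Measure M)
    {f : M → M} (hf : MeasurePreserving f μ μ) {U V : Set M}
    (hU : MeasurableSet U) (hV : MeasurableSet V) (hVU : V ⊆ U) (K ℓ : ℕ) :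
    μ (U ∩ {x | ℓ - 1 ≤ retCount f U K x}) ≤
      μ (V ∩ {x | ℓ - 1 ≤ retCount f V K x}) + ((K : ENNReal) + 1) * μ (U \ V) := by
  have hsub : U ∩ {x | ℓ - 1 ≤ retCount f U K x} ⊆
      ((V ∩ {x | ℓ - 1 ≤ retCount f V K x}) ∪ (U \ V)) ∪
        ⋃ i ∈ Finset.Icc 1 K, f^[i] ⁻¹' (U \ V) := by
    rintro x ⟨hxU, hx⟩
    by_cases hxV : x ∈ V
    · by_cases hr : ℓ - 1 ≤ retCount f V K x
      · exact Or.inl (Or.inl ⟨hxV, hr⟩)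
      · push_neg at hr
        have hlt : retCount f V K x < retCount f U K x := lt_of_lt_of_le hr hx
        have hex : ∃ i ∈ Finset.Icc 1 K,
            U.indicator (fun _ => (1 : ℕ)) (f^[i] x) ≤ V.indicator (fun _ => 1) (f^[i] x) →
              False := by
          by_contra h
          push_neg at h
          have h' : ∀ i ∈ Finset.Icc 1 K,
              U.indicator (fun _ => (1 : ℕ)) (f^[i] x) ≤ V.indicator (fun _ => 1) (f^[i] x) := by
            intro i hi
            by_contra habs
            exact absurd habs (by simpa using (h i hi))
          have := Finset.sum_le_sum h'
          simp only [retCount] at hlt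
          omega
        obtain ⟨i, hi, hlt'⟩ := hex
        refine Or.inr (Set.mem_biUnion hi ?_)
        by_cases h1 : f^[i] x ∈ V
        · exact absurd (by simp [Set.indicator_apply, h1, hVU h1]) hlt'
        by_cases h2 : f^[i] x ∈ U
        · exact ⟨h2, h1⟩
        · exact absurd (by simp [Set.indicator_apply, h1, h2]) hlt'
    · exact Or.inl (Or.inr ⟨hxU, hxV⟩)
  have hpre : ∀ i : ℕ, μ (f^[i] ⁻¹' (U \ V)) = μ (U \ V) := fun i =>
    (hf.iterate i).measure_preimage (hU.diff hV).nullMeasurableSet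
  calc μ (U ∩ {x | ℓ - 1 ≤ retCount f U K x})
      ≤ μ (((V ∩ {x | ℓ - 1 ≤ retCount f V K x}) ∪ (U \ V)) ∪
          ⋃ i ∈ Finset.Icc 1 K, f^[i] ⁻¹' (U \ V)) := measure_mono hsub
    _ ≤ μ ((V ∩ {x | ℓ - 1 ≤ retCount f V K x}) ∪ (U \ V)) +
          μ (⋃ i ∈ Finset.Icc 1 K, f^[i] ⁻¹' (U \ V)) := measure_union_le _ _
    _ ≤ (μ (V ∩ {x | ℓ - 1 ≤ retCount f V K x}) + μ (U \ V)) +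
          ∑ i ∈ Finset.Icc 1 K, μ (f^[i] ⁻¹' (U \ V)) := by
        gcongr
        · exact measure_union_le _ _
        · exact measure_biUnion_finset_le _ _
    _ = μ (V ∩ {x | ℓ - 1 ≤ retCount f V K x}) + ((K : ENNReal) + 1) * μ (U \ V) := by
        simp only [hpre, Finset.sum_const, Nat.card_Icc, Nat.add_sub_cancel, smul_eq_mul]
        ring

lemma arith_bound (K : ℕ) {a b u v d : ℝ} (hu : 0 < u) (hd : 0 ≤ d) (hb : 0 ≤ b)
    (hba : b ≤ a) (hau : a ≤ u) (huv : u = v + d)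
    (hKd : a ≤ b + ((K : ℝ) + 1) * d) (hhalf : d / u < 1 / 2) :
    |a / u - b / v| ≤ ((K : ℝ) + 3) * (d / u) := by
  have hdu : d < u / 2 := by
    have := (div_lt_iff₀ hu).mp hhalf; linarith
  have hv0 : 0 < v := by linarith
  have hε0 : 0 ≤ d / u := div_nonneg hd hu.le
  have hK0 : (0 : ℝ) ≤ (K : ℝ) := Nat.cast_nonneg K
  have hε1 : 0 ≤ ((K : ℝ) + 1) * (d / u) := by positivity
  rw [abs_sub_le_iff]
  constructor
  · have h1 : a / u ≤ (b + ((K : ℝ) + 1) * d) / u := by gcongr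
    have h3 : (b + ((K : ℝ) + 1) * d) / u = b / u + ((K : ℝ) + 1) * (d / u) := by ring
    have h2 : b / u ≤ b / v := by
      apply div_le_div_of_nonneg_left hb hv0
      linarith
    linarith
  · have h5 : b / v ≤ a / v := by gcongr
    have h4 : a / v ≤ (a + 2 * d) / u := by
      rw [div_le_div_iff₀ hv0 hu]
      nlinarith
    have h6 : (a + 2 * d) / u = a / u + 2 * (d / u) := by ring
    linarith

/-- If `V n ⊆ U n` are nested sequences with
`μ(U n \ V n)/μ(U n) → 0`, then for each fixed `K ≥ 1` and `ℓ ≥ 1` the difference of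
the conditional return probabilities tends to `0`; consequently the iterated limits
`α̂_ℓ^U` and `α̂_ℓ^V`, whenever they exist, coincide. -/
theorem hatAlpha_inner_approximation
    {M : Type*} [MeasurableSpace M] (μ : Measure M) [IsProbabilityMeasure μ]
    (f : M → M) (hf : MeasurePreserving f μ μ)
    (U V : ℕ → Set M) (hUmeas : ∀ n, MeasurableSet (U n)) (hVmeas : ∀ n, MeasurableSet (V n))
    (hUnested : ∀ n, U (n + 1) ⊆ U n) (hVnested : ∀ n, V (n + 1) ⊆ V n)
    (hVU : ∀ n, V n ⊆ U n) (hUpos : ∀ n, 0 < μ (U n))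
    (hratio : Tendsto (fun n => (μ (U n \ V n)).toReal / (μ (U n)).toReal) atTop (nhds 0)) :
    (∀ K ℓ : ℕ, 1 ≤ K → 1 ≤ ℓ →
        Tendsto (fun n => condRet μ f (U n) K ℓ - condRet μ f (V n) K ℓ) atTop (nhds 0)) ∧
    (∀ (ℓ : ℕ), 1 ≤ ℓ → ∀ (AU AV : ℕ → ℝ) (aU aV : ℝ),
        (∀ K, 1 ≤ K → Tendsto (fun n => condRet μ f (U n) K ℓ) atTop (nhds (AU K))) →
        (∀ K, 1 ≤ K → Tendsto (fun n => condRet μ f (V n) K ℓ) atTop (nhds (AV K))) →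
        Tendsto AU atTop (nhds aU) → Tendsto AV atTop (nhds aV) → aU = aV) := by
  have main : ∀ K ℓ : ℕ, 1 ≤ K → 1 ≤ ℓ →
      Tendsto (fun n => condRet μ f (U n) K ℓ - condRet μ f (V n) K ℓ) atTop (nhds 0) := by
    intro K ℓ hK hℓ
    apply squeeze_zero_norm'
      (a := fun n => ((K : ℝ) + 3) * ((μ (U n \ V n)).toReal / (μ (U n)).toReal))
    · have hev : ∀ᶠ n in atTop,
          (μ (U n \ V n)).toReal / (μ (U n)).toReal < 1 / 2 :=
        hratio.eventually_lt_const (by norm_num)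
      filter_upwards [hev] with n hn
      set a := (μ (U n ∩ {x | ℓ - 1 ≤ retCount f (U n) K x})).toReal with ha
      set b := (μ (V n ∩ {x | ℓ - 1 ≤ retCount f (V n) K x})).toReal with hb
      set u := (μ (U n)).toReal with hud
      set v := (μ (V n)).toReal with hvd
      set d := (μ (U n \ V n)).toReal with hdd
      have hu0 : 0 < u := ENNReal.toReal_pos (hUpos n).ne' (measure_ne_top μ _)
      have hd0 : 0 ≤ d := ENNReal.toReal_nonneg
      have hb0 : 0 ≤ b := ENNReal.toReal_nonneg
      have hsubVU : V n ∩ {x | ℓ - 1 ≤ retCount f (V n) K x} ⊆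
          U n ∩ {x | ℓ - 1 ≤ retCount f (U n) K x} := by
        rintro x ⟨h1, h2⟩
        exact ⟨hVU n h1, le_trans h2 (retCount_mono (hVU n) K x)⟩
      have hba : b ≤ a :=
        ENNReal.toReal_mono (measure_ne_top μ _) (measure_mono hsubVU)
      have hau : a ≤ u :=
        ENNReal.toReal_mono (measure_ne_top μ _) (measure_mono Set.inter_subset_left)
      have huv : u = v + d := by
        have hμ : μ (V n) + μ (U n \ V n) = μ (U n) := by
          rw [← measure_union disjoint_sdiff_self_right ((hUmeas n).diff (hVmeas n)),
            Set.union_diff_cancel (hVU n)]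
        rw [hud, hvd, hdd, ← hμ, ENNReal.toReal_add (measure_ne_top μ _) (measure_ne_top μ _)]
      have hKd : a ≤ b + ((K : ℝ) + 1) * d := by
        have hkey := key_measure_ineq μ hf (hUmeas n) (hVmeas n) (hVU n) K ℓ
        have := ENNReal.toReal_mono (by finiteness) hkey
        rw [ENNReal.toReal_add (by finiteness) (by finiteness), ENNReal.toReal_mul] at this
        have hcast : ((K : ENNReal) + 1).toReal = (K : ℝ) + 1 := by
          rw [ENNReal.toReal_add (ENNReal.natCast_ne_top K) ENNReal.one_ne_top,
            ENNReal.toReal_natCast, ENNReal.toReal_one]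
        rw [hcast] at this
        exact this
      have := arith_bound K hu0 hd0 hb0 hba hau huv hKd hn
      rw [Real.norm_eq_abs]
      exact this
    · simpa using hratio.const_mul ((K : ℝ) + 3)
  refine ⟨main, ?_⟩
  intro ℓ hℓ AU AV aU aV hAU hAV haU haV
  have hKeq : ∀ K, 1 ≤ K → AU K = AV K := by
    intro K hK
    have h1 := (hAU K hK).sub (hAV K hK)
    have h2 := main K ℓ hK hℓ
    have h3 := tendsto_nhds_unique h1 h2
    linarith
  have hAUtend : Tendsto AU atTop (nhds aV) := by
    refine haV.congr' ?_
    filter_upwards [eventually_ge_atTop 1] with K hK using (hKeq K hK).symm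
  exact tendsto_nhds_unique haU hAUtend
end

section
/- Let (M, ℬ, μ, f) be a measure-preserving system, τ > 0 a real number, and let {U_n}, {V_n} be nested sequences of measurable sets with V_n ⊆ U_n, μ(V_n) > 0 for each n, μ(U_n) → 0, and μ(U_n \ V_n)/μ(U_n) → 0 as n → ∞. Then for every k ∈ ℕ, |μ({x : Σ_{i=0}^{⌊τ/μ(U_n)⌋−1} 1_{U_n}(f^i(x)) = k}) − μ({x : Σ_{i=0}^{⌊τ/μ(V_n)⌋−1} 1_{V_n}(f^i(x)) = k})| → 0 as n → ∞. -/
open MeasureTheory Filter Topology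

/-!
With `N = ⌊τ/μ(U)⌋` and `N' = ⌊τ/μ(V)⌋ ≥ N`, the counts `ζ^N_U(x)` and `ζ^{N'}_V(x)` agree unless
`x` enters `U \ V` before time `N` or enters `V` during `[N, N')`. By invariance of `μ` these two
events have measure at most `N μ(U \ V) ≤ τ μ(U \ V)/μ(U)` and
`(N' - N) μ(V) ≤ τ μ(U \ V)/μ(U) + μ(V)`, and both bounds tend to `0`.
-/

/-- The number of indices `0 ≤ i < N` with `f^[i] x ∈ U` (entry-times count). -/
noncomputable def hitCount {M : Type*} (f : M → M) (U : Set M) (N : ℕ) (x : M) : ℕ :=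
  ∑ i ∈ Finset.range N, U.indicator (fun _ => 1) (f^[i] x)

open scoped symmDiff

section HitCount

variable {M : Type*} {f : M → M} {U V : Set M} {N N' : ℕ} {x : M}

theorem hitCount_congr (h : ∀ i < N, (f^[i] x ∈ U ↔ f^[i] x ∈ V)) :
    hitCount f U N x = hitCount f V N x := by
  unfold hitCount
  refine Finset.sum_congr rfl fun i hi => ?_
  by_cases hV : f^[i] x ∈ V
  · rw [Set.indicator_of_mem hV, Set.indicator_of_mem ((h i (Finset.mem_range.1 hi)).2 hV)]
  · rw [Set.indicator_of_notMem hV,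
      Set.indicator_of_notMem (mt (h i (Finset.mem_range.1 hi)).1 hV)]

theorem hitCount_eq_of_forall_Ico_notMem (hN : N ≤ N')
    (h : ∀ i ∈ Finset.Ico N N', f^[i] x ∉ V) : hitCount f V N' x = hitCount f V N x := by
  rw [hitCount, ← Finset.sum_range_add_sum_Ico _ hN,
    Finset.sum_eq_zero fun i hi => Set.indicator_of_notMem (h i hi) _, add_zero, hitCount]

/-- Off this set, the first `N` visits to `U` are visits to `V`, and `V` is not visited
between times `N` and `N'`. -/
theorem symmDiff_hitCount_subset (hVU : V ⊆ U) (hN : N ≤ N') (k : ℕ) :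
    {x | hitCount f U N x = k} ∆ {x | hitCount f V N' x = k} ⊆
      (⋃ i ∈ Finset.range N, f^[i] ⁻¹' (U \ V)) ∪ ⋃ i ∈ Finset.Ico N N', f^[i] ⁻¹' V := by
  intro x hx
  by_contra hbad
  simp only [Set.mem_union, Set.mem_iUnion, Set.mem_preimage, not_or, not_exists] at hbad
  obtain ⟨hUV, hV⟩ := hbad
  have hagree : ∀ i < N, (f^[i] x ∈ U ↔ f^[i] x ∈ V) := fun i hi =>
    ⟨fun hU => by_contra fun hnV => hUV i (Finset.mem_range.2 hi) ⟨hU, hnV⟩, fun h => hVU h⟩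
  have heq : hitCount f U N x = hitCount f V N' x := by
    rw [hitCount_congr hagree, hitCount_eq_of_forall_Ico_notMem hN hV]
  simp [Set.mem_symmDiff, heq] at hx

end HitCount

theorem abs_measureReal_sub_le_of_symmDiff_subset {α : Type*} [MeasurableSpace α]
    {μ : Measure α} [IsFiniteMeasure μ] {s t u : Set α} (h : s ∆ t ⊆ u) :
    |μ.real s - μ.real t| ≤ μ.real u := by
  rw [abs_sub_le_iff]
  constructor
  · exact (le_measureReal_sdiff (μ := μ)).trans (measureReal_mono (Set.union_subset_iff.1 h).1)
  · exact (le_measureReal_sdiff (μ := μ)).trans (measureReal_mono (Set.union_subset_iff.1 h).2)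

theorem MeasureTheory.MeasurePreserving.measureReal_biUnion_iterate_preimage_le {M : Type*}
    [MeasurableSpace M] {μ : Measure M} [IsFiniteMeasure μ] {f : M → M}
    (hf : MeasurePreserving f μ μ) (s : Finset ℕ) (A : Set M) :
    μ.real (⋃ i ∈ s, f^[i] ⁻¹' A) ≤ s.card * μ.real A := by
  calc μ.real (⋃ i ∈ s, f^[i] ⁻¹' A) ≤ ∑ i ∈ s, μ.real (f^[i] ⁻¹' A) :=
        measureReal_biUnion_finset_le s _
    _ ≤ ∑ _i ∈ s, μ.real A := Finset.sum_le_sum fun i _ =>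
        ENNReal.toReal_mono (measure_ne_top μ A) ((hf.iterate i).measure_preimage_le A)
    _ = s.card * μ.real A := by rw [Finset.sum_const, nsmul_eq_mul]

theorem floor_div_mul_sub_add_floor_div_sub_mul_le {τ a b : ℝ} (hτ : 0 ≤ τ) (hb : 0 < b)
    (hba : b ≤ a) :
    (⌊τ / a⌋₊ : ℝ) * (a - b) + ((⌊τ / b⌋₊ : ℝ) - ⌊τ / a⌋₊) * b ≤ 2 * τ * ((a - b) / a) + b := by
  have ha : 0 < a := hb.trans_le hba
  have hNa : (⌊τ / a⌋₊ : ℝ) ≤ τ / a := Nat.floor_le (by positivity)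
  have hNa' : τ / a - 1 ≤ ⌊τ / a⌋₊ := (Nat.sub_one_lt_floor _).le
  have hNb : (⌊τ / b⌋₊ : ℝ) ≤ τ / b := Nat.floor_le (by positivity)
  have h1 : (⌊τ / a⌋₊ : ℝ) * (a - b) ≤ τ * ((a - b) / a) := by
    calc (⌊τ / a⌋₊ : ℝ) * (a - b) ≤ τ / a * (a - b) := by gcongr
      _ = τ * ((a - b) / a) := by ring
  have h2 : ((⌊τ / b⌋₊ : ℝ) - ⌊τ / a⌋₊) * b ≤ τ * ((a - b) / a) + b := by
    calc ((⌊τ / b⌋₊ : ℝ) - ⌊τ / a⌋₊) * b ≤ (τ / b - (τ / a - 1)) * b := by gcongr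
      _ = τ * ((a - b) / a) + b := by field_simp; ring
  linarith

theorem MeasureTheory.MeasurePreserving.abs_measureReal_hitCount_sub_le {M : Type*}
    [MeasurableSpace M] {μ : Measure M} [IsFiniteMeasure μ] {f : M → M}
    (hf : MeasurePreserving f μ μ) {τ : ℝ} (hτ : 0 ≤ τ) {U V : Set M} (hV : MeasurableSet V)
    (hVU : V ⊆ U) (hVpos : 0 < μ V) (k : ℕ) :
    |μ.real {x | hitCount f U ⌊τ / μ.real U⌋₊ x = k} -
        μ.real {x | hitCount f V ⌊τ / μ.real V⌋₊ x = k}| ≤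
      2 * τ * (μ.real (U \ V) / μ.real U) + μ.real V := by
  have hb : 0 < μ.real V := ENNReal.toReal_pos hVpos.ne' (measure_ne_top μ V)
  have hba : μ.real V ≤ μ.real U := measureReal_mono hVU
  set NU := ⌊τ / μ.real U⌋₊
  set NV := ⌊τ / μ.real V⌋₊
  have hN : NU ≤ NV := Nat.floor_le_floor (by gcongr)
  calc _ ≤ μ.real ((⋃ i ∈ Finset.range NU, f^[i] ⁻¹' (U \ V)) ∪
          ⋃ i ∈ Finset.Ico NU NV, f^[i] ⁻¹' V) :=
        abs_measureReal_sub_le_of_symmDiff_subset (symmDiff_hitCount_subset hVU hN k)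
    _ ≤ NU * μ.real (U \ V) + (NV - NU : ℕ) * μ.real V := by
        refine (measureReal_union_le _ _).trans (add_le_add ?_ ?_)
        · simpa only [Finset.card_range] using
            hf.measureReal_biUnion_iterate_preimage_le (Finset.range NU) (U \ V)
        · simpa only [Nat.card_Ico] using
            hf.measureReal_biUnion_iterate_preimage_le (Finset.Ico NU NV) V
    _ ≤ _ := by
        rw [measureReal_sdiff hVU hV, Nat.cast_sub hN]
        exact floor_div_mul_sub_add_floor_div_sub_mul_le hτ hb hba

theorem entry_times_inner_approximation_general
    {M : Type*} [MeasurableSpace M] (μ : Measure M) [IsProbabilityMeasure μ]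
    (f : M → M) (hf : MeasurePreserving f μ μ)
    (τ : ℝ) (hτ : 0 < τ)
    (U V : ℕ → Set M) (hVmeas : ∀ n, MeasurableSet (V n))
    (hVU : ∀ n, V n ⊆ U n) (hVpos : ∀ n, 0 < μ (V n))
    (hU0 : Tendsto (fun n => μ (U n)) atTop (nhds 0))
    (hratio : Tendsto (fun n => (μ (U n \ V n)).toReal / (μ (U n)).toReal) atTop (nhds 0))
    (k : ℕ) :
    Tendsto (fun n =>
        |(μ {x | hitCount f (U n) ⌊τ / (μ (U n)).toReal⌋₊ x = k}).toReal -
          (μ {x | hitCount f (V n) ⌊τ / (μ (V n)).toReal⌋₊ x = k}).toReal|)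
      atTop (nhds 0) := by
  have hU0' : Tendsto (fun n => μ.real (U n)) atTop (𝓝 0) :=
    (ENNReal.tendsto_toReal ENNReal.zero_ne_top).comp hU0
  have hV0 : Tendsto (fun n => μ.real (V n)) atTop (𝓝 0) :=
    squeeze_zero (fun n => measureReal_nonneg) (fun n => measureReal_mono (hVU n)) hU0'
  refine squeeze_zero (fun n => abs_nonneg _)
    (fun n => hf.abs_measureReal_hitCount_sub_le hτ.le (hVmeas n) (hVU n) (hVpos n) k) ?_
  have := (hratio.const_mul (2 * τ)).add hV0
  rwa [mul_zero, add_zero] at this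

/-- If `V n ⊆ U n` are nested sequences with `μ(U n) → 0` and
`μ(U n \ V n)/μ(U n) → 0`, then the entry-times distributions of `U n` and `V n`
(with their respective Kac normalizations `⌊τ/μ(U n)⌋` and `⌊τ/μ(V n)⌋`) are
asymptotically the same. -/
theorem entry_times_inner_approximation
    {M : Type*} [MeasurableSpace M] (μ : Measure M) [IsProbabilityMeasure μ]
    (f : M → M) (hf : MeasurePreserving f μ μ)
    (τ : ℝ) (hτ : 0 < τ)
    (U V : ℕ → Set M) (hUmeas : ∀ n, MeasurableSet (U n)) (hVmeas : ∀ n, MeasurableSet (V n))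
    (hUnested : ∀ n, U (n + 1) ⊆ U n) (hVnested : ∀ n, V (n + 1) ⊆ V n)
    (hVU : ∀ n, V n ⊆ U n) (hVpos : ∀ n, 0 < μ (V n))
    (hU0 : Tendsto (fun n => μ (U n)) atTop (nhds 0))
    (hratio : Tendsto (fun n => (μ (U n \ V n)).toReal / (μ (U n)).toReal) atTop (nhds 0))
    (k : ℕ) :
    Tendsto (fun n =>
        |(μ {x | hitCount f (U n) ⌊τ / (μ (U n)).toReal⌋₊ x = k}).toReal -
          (μ {x | hitCount f (V n) ⌊τ / (μ (V n)).toReal⌋₊ x = k}).toReal|)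
      atTop (nhds 0) :=
  entry_times_inner_approximation_general μ f hf τ hτ U V hVmeas hVU hVpos hU0 hratio k
end

section
/- Let M be a compact metric space, f : M → M a continuous map, and {U_n} a nested sequence of subsets of M (not necessarily open) such that ⋂_n U_n = ⋂_n cl(U_n); write Λ = ⋂_n U_n. Then the following are equivalent: (1) π(U_n) → ∞, i.e. for every N there is n₀ such that for all n ≥ n₀ and all 1 ≤ k ≤ N, f^{−k}(U_n) ∩ U_n = ∅; (2) for every y ∈ Λ and every integer k ≥ 1, f^k(y) ∉ Λ (equivalently: Λ contains no periodic point of f and Λ intersects every orbit of f at most once). -/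
open Filter Topology

/-- For a continuous map `f` on a compact metric space and a nested
sequence of sets `U n` with `⋂ n, U n = ⋂ n, closure (U n) = Λ`, the periods
`π(U n)` tend to infinity if and only if `Λ` contains no periodic point and meets
every orbit at most once (i.e. `f^k y ∉ Λ` for every `y ∈ Λ` and `k ≥ 1`). -/
theorem period_tendsto_iff_no_periodic
    {M : Type*} [MetricSpace M] [CompactSpace M]
    (f : M → M) (hf : Continuous f)
    (U : ℕ → Set M) (hnested : ∀ n, U (n + 1) ⊆ U n)
    (hcl : ⋂ n, U n = ⋂ n, closure (U n)) :
    (∀ N : ℕ, ∃ n₀, ∀ n ≥ n₀, ∀ k, 1 ≤ k → k ≤ N → ∀ x ∈ U n, f^[k] x ∉ U n)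
      ↔ (∀ y ∈ ⋂ n, U n, ∀ k : ℕ, 1 ≤ k → f^[k] y ∉ ⋂ n, U n) := by
  have hanti : Antitone U := antitone_nat_of_succ_le hnested
  constructor
  · intro h y hy k hk hk'
    obtain ⟨n₀, hn₀⟩ := h k
    exact hn₀ n₀ le_rfl k hk le_rfl y (Set.mem_iInter.mp hy n₀) (Set.mem_iInter.mp hk' n₀)
  · intro h N
    by_contra hcon
    push_neg at hcon
    have hchoice : ∀ m : ℕ, ∃ x : M, ∃ k : ℕ, 1 ≤ k ∧ k ≤ N ∧ x ∈ U m ∧ f^[k] x ∈ U m := by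
      intro m
      obtain ⟨n, hn, k, hk1, hkN, x, hx, hfx⟩ := hcon m
      exact ⟨x, k, hk1, hkN, hanti hn hx, hanti hn hfx⟩
    choose x k hk1 hkN hxU hfxU using hchoice
    -- pigeonhole: some value of k occurs infinitely often
    obtain ⟨c, hc⟩ := Finite.exists_infinite_fiber
      (fun m => (⟨k m, Nat.lt_succ_of_le (hkN m)⟩ : Fin (N + 1)))
    rw [Set.infinite_coe_iff] at hc
    have hfreq : ∃ᶠ m in atTop, k m = c.val := by
      rw [Nat.frequently_atTop_iff_infinite]
      apply hc.mono
      intro m hm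
      have : (⟨k m, Nat.lt_succ_of_le (hkN m)⟩ : Fin (N + 1)) = c := hm
      simpa using congrArg Fin.val this
    obtain ⟨φ, hφ, hkc⟩ := Filter.extraction_of_frequently_atTop hfreq
    -- compactness: convergent subsequence
    obtain ⟨y, -, ψ, hψ, hty⟩ := isCompact_univ.tendsto_subseq
      (x := fun j => x (φ j)) (fun j => Set.mem_univ _)
    have hge : ∀ n, ∀ j, n ≤ j → n ≤ φ (ψ j) := fun n j hj =>
      le_trans hj (le_trans hψ.le_apply hφ.le_apply)
    have hy : ∀ n, y ∈ closure (U n) := by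
      intro n
      apply mem_closure_of_tendsto hty
      filter_upwards [Filter.eventually_ge_atTop n] with j hj
      exact hanti (hge n j hj) (hxU _)
    have htyf : Tendsto (fun j => f^[c.val] (x (φ (ψ j)))) atTop (𝓝 (f^[c.val] y)) :=
      ((hf.iterate c.val).tendsto y).comp hty
    have hfy : ∀ n, f^[c.val] y ∈ closure (U n) := by
      intro n
      apply mem_closure_of_tendsto htyf
      filter_upwards [Filter.eventually_ge_atTop n] with j hj
      have := hfxU (φ (ψ j))
      rw [hkc (ψ j)] at this
      exact hanti (hge n j hj) this
    have hc1 : 1 ≤ c.val := by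
      have := hk1 (φ 0)
      rwa [hkc 0] at this
    have hyΛ : y ∈ ⋂ n, U n := by rw [hcl]; exact Set.mem_iInter.mpr hy
    have hfyΛ : f^[c.val] y ∈ ⋂ n, U n := by rw [hcl]; exact Set.mem_iInter.mpr hfy
    exact h y hyΛ c.val hc1 hfyΛ
end

section
/- Let (Ω, ℬ, μ, T) be a measure-preserving system, j ≥ 1 an integer, and U ∈ ℬ. Let {A_i}_{i∈I} be a countable family of pairwise disjoint measurable sets with μ(A_i) > 0 covering U (i.e. U ⊆ ⋃_i A_i). Suppose there are constants c > 0 and D > 0 such that for every i ∈ I: the sets T^j(A_i) and T^j(T^{−j}(U) ∩ A_i) are measurable, μ(T^j(A_i)) ≥ c, and μ(T^{−j}(U) ∩ A_i)·μ(T^j(A_i)) ≤ D·μ(T^j(T^{−j}(U) ∩ A_i))·μ(A_i). Then μ(U ∩ T^{−j}(U)) ≤ (D/c)·μ(U)·μ(⋃{A_i : A_i ∩ U ≠ ∅}). (Here one uses that T^j(T^{−j}(U) ∩ A_i) ⊆ U, so μ(T^j(T^{−j}(U) ∩ A_i)) ≤ μ(U).) -/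
open MeasureTheory Filter Topology
open scoped ENNReal

/-- The key short-correlation estimate: if a countable disjoint family
`{A i}` of positive-measure sets covers `U`, each image `T^j(A i)` has measure at least
`c` (big image property), and the bounded distortion inequality
`μ(T^{-j}U ∩ A i) · μ(T^j(A i)) ≤ D · μ(T^j(T^{-j}U ∩ A i)) · μ(A i)` holds, then
`μ(U ∩ T^{-j}U) ≤ (D/c) · μ(U) · μ(⋃ {A i : A i ∩ U ≠ ∅})`. -/
theorem short_correlation_estimate
    {Ω : Type*} [MeasurableSpace Ω] (μ : Measure Ω) [IsProbabilityMeasure μ]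
    (T : Ω → Ω) (hT : MeasurePreserving T μ μ)
    (j : ℕ) (hj : 1 ≤ j) (U : Set Ω) (hU : MeasurableSet U)
    {ι : Type*} [Countable ι] (A : ι → Set Ω)
    (hAmeas : ∀ i, MeasurableSet (A i))
    (hdisj : Pairwise (Function.onFun Disjoint A))
    (hApos : ∀ i, 0 < μ (A i))
    (hcover : U ⊆ ⋃ i, A i)
    (c D : ℝ≥0∞) (hc : 0 < c) (hD : 0 < D)
    (himg : ∀ i, MeasurableSet (T^[j] '' A i))
    (himg' : ∀ i, MeasurableSet (T^[j] '' (T^[j] ⁻¹' U ∩ A i)))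
    (hbig : ∀ i, c ≤ μ (T^[j] '' A i))
    (hdist : ∀ i, μ (T^[j] ⁻¹' U ∩ A i) * μ (T^[j] '' A i)
        ≤ D * μ (T^[j] '' (T^[j] ⁻¹' U ∩ A i)) * μ (A i)) :
    μ (U ∩ T^[j] ⁻¹' U) ≤ D / c * μ U * μ (⋃ i ∈ {i : ι | (A i ∩ U).Nonempty}, A i) := by
  set S : Set ι := {i : ι | (A i ∩ U).Nonempty} with hS
  have hSc : S.Countable := Set.to_countable S
  -- key pointwise bound
  have key : ∀ i, μ (T^[j] ⁻¹' U ∩ A i) ≤ D / c * μ U * μ (A i) := by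
    intro i
    have hcfin : c ≠ ∞ := fun h => measure_ne_top μ (T^[j] '' A i) (top_le_iff.mp (h ▸ hbig i))
    have h1 : μ (T^[j] '' (T^[j] ⁻¹' U ∩ A i)) ≤ μ U :=
      measure_mono (Set.image_subset_iff.mpr fun x hx => hx.1)
    have h2 : μ (T^[j] ⁻¹' U ∩ A i) * c ≤ D * μ U * μ (A i) := by
      calc μ (T^[j] ⁻¹' U ∩ A i) * c
          ≤ μ (T^[j] ⁻¹' U ∩ A i) * μ (T^[j] '' A i) := mul_le_mul_right (hbig i) _
        _ ≤ D * μ (T^[j] '' (T^[j] ⁻¹' U ∩ A i)) * μ (A i) := hdist i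
        _ ≤ D * μ U * μ (A i) := by gcongr
    have heq : D / c * μ U * μ (A i) = D * μ U * μ (A i) / c := by
      rw [div_eq_mul_inv, div_eq_mul_inv]; ring
    rw [heq, ENNReal.le_div_iff_mul_le (Or.inl hc.ne') (Or.inl hcfin)]
    exact h2
  -- the intersection is covered by the relevant pieces
  have hsub : U ∩ T^[j] ⁻¹' U ⊆ ⋃ i ∈ S, (T^[j] ⁻¹' U ∩ A i) := by
    intro x hx
    obtain ⟨_, ⟨i, rfl⟩, hxi⟩ := hcover hx.1
    exact Set.mem_biUnion ⟨x, hxi, hx.1⟩ ⟨hx.2, hxi⟩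
  calc μ (U ∩ T^[j] ⁻¹' U)
      ≤ μ (⋃ i ∈ S, (T^[j] ⁻¹' U ∩ A i)) := measure_mono hsub
    _ ≤ ∑' i : S, μ (T^[j] ⁻¹' U ∩ A i) := measure_biUnion_le μ hSc _
    _ ≤ ∑' i : S, D / c * μ U * μ (A i) := ENNReal.tsum_le_tsum fun i => key i
    _ = D / c * μ U * ∑' i : S, μ (A i) := by rw [ENNReal.tsum_mul_left]
    _ = D / c * μ U * μ (⋃ i ∈ S, A i) := by
        rw [measure_biUnion hSc (hdisj.pairwiseDisjoint S) fun i _ => hAmeas i]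
end

section
/- Let (M, ℬ, μ, f) be a measure-preserving system and {U_n} a nested sequence of measurable sets with μ(U_n) > 0 and μ(U_n) → 0. Assume that for every ℓ ≥ 1 and every sufficiently large K the limit α̂_ℓ(K) = lim_{n→∞} μ_{U_n}(τ_{U_n}^{ℓ−1} ≤ K) exists, set α̂_ℓ = lim_{K→∞} α̂_ℓ(K), and assume Σ_{ℓ≥1} ℓ·α̂_ℓ < ∞. For K ≥ 1 write Z_n^{K,−}(x) = Σ_{i=0}^{K−1} 1_{U_n}(f^i(x)) and Z_n^{K,+}(x) = Σ_{i=K}^{2K} 1_{U_n}(f^i(x)). Then for every η > 0 and every ℓ ≥ 1 there exists K₀ such that for every K ≥ K₀ there exists n₀ with: for all n ≥ n₀ and all integers 0 ≤ k, k' < ℓ, |μ({x : Z_n^{K,−}(x) = k, Z_n^{K,+}(x) = ℓ − k, f^K(x) ∈ U_n}) − μ({x : Z_n^{K,−}(x) = k', Z_n^{K,+}(x) = ℓ − k', f^K(x) ∈ U_n})| ≤ η·μ(U_n). -/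
/-!
Let `B_k` be the event "split `(k, ℓ - k)` with a visit at time `K`". For `x ∈ B_k` let `K + s`
be its first visit after `K`. Moving along the orbit by `s` turns the visit at `K` into a visit
of the left half of the window, so `f^[s] x ∈ B_{k+1}` unless a visit leaves or enters the
window; as `x` has no visit in `(K, K + s)`, that forces a visit at distance more than `K / 2`
from the centre. Conversely every point of `B_{k+1}` is reached exactly once, with `s` the gap
back to its last visit before `K`. Since `f` preserves `μ`, `|μ B_{k+1} - μ B_k|` is bounded by
the measure of the far-visit event, hence by `2 Σ_{K/2 < g ≤ 2K} μ(U ∩ f^{-g} U)`, which is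
`2 μ(U)` times the difference of the mean numbers of returns to `U` within times `2K` and `K/2`.
For fixed `K` these means converge as `n → ∞`, and their limits converge as `K → ∞` by dominated
convergence (`A ℓ K ≤ α̂ ℓ` with `Σ α̂ ℓ < ∞`), so the difference is eventually small.
-/

open MeasureTheory Filter Topology

/-- `Z^{K,-} = Σ_{i=0}^{K-1} 1_U(f^i x)`, the number of entries before the center time. -/
noncomputable def Zminus {M : Type*} (f : M → M) (U : Set M) (K : ℕ) (x : M) : ℕ :=
  ∑ i ∈ Finset.range K, U.indicator (fun _ => 1) (f^[i] x)

/-- `Z^{K,+} = Σ_{i=K}^{2K} 1_U(f^i x)`, the number of entries at or after the center time. -/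
noncomputable def Zplus {M : Type*} (f : M → M) (U : Set M) (K : ℕ) (x : M) : ℕ :=
  ∑ i ∈ Finset.Icc K (2 * K), U.indicator (fun _ => 1) (f^[i] x)

open Finset

section Visits

variable {M : Type*} (f : M → M) (V : Set M)

def ConsecutiveVisits (a b : ℕ) (x : M) : Prop :=
  a < b ∧ f^[a] x ∈ V ∧ f^[b] x ∈ V ∧ ∀ i, a < i → i < b → f^[i] x ∉ V

variable {f V}

theorem consecutiveVisits_iterate {a b s : ℕ} {x : M} :
    ConsecutiveVisits f V a b (f^[s] x) ↔ ConsecutiveVisits f V (a + s) (b + s) x := by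
  simp only [ConsecutiveVisits, ← Function.iterate_add_apply]
  refine ⟨fun ⟨hab, ha, hb, hgap⟩ => ⟨by omega, ha, hb, fun i hai hib => ?_⟩,
    fun ⟨hab, ha, hb, hgap⟩ =>
      ⟨by omega, ha, hb, fun i hai hib => hgap (i + s) (by omega) (by omega)⟩⟩
  obtain ⟨j, rfl⟩ : ∃ j, i = j + s := ⟨i - s, by omega⟩
  exact hgap j (by omega) (by omega)

theorem consecutiveVisits_iterate_sub {K s : ℕ} (hs : s ≤ K) {x : M} :
    ConsecutiveVisits f V (K - s) K (f^[s] x) ↔ ConsecutiveVisits f V K (K + s) x := by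
  rw [consecutiveVisits_iterate, Nat.sub_add_cancel hs]

theorem ConsecutiveVisits.left_unique {a a' b : ℕ} {x : M} (h : ConsecutiveVisits f V a b x)
    (h' : ConsecutiveVisits f V a' b x) : a = a' := by
  by_contra hne
  rcases Nat.lt_or_gt_of_ne hne with hlt | hlt
  · exact h.2.2.2 a' hlt h'.1 h'.2.1
  · exact h'.2.2.2 a hlt h.1 h.2.1

theorem ConsecutiveVisits.right_unique {a b b' : ℕ} {x : M} (h : ConsecutiveVisits f V a b x)
    (h' : ConsecutiveVisits f V a b' x) : b = b' := by
  by_contra hne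
  rcases Nat.lt_or_gt_of_ne hne with hlt | hlt
  · exact h'.2.2.2 b h.1 hlt h.2.2.1
  · exact h.2.2.2 b' h'.1 hlt h'.2.2.1

theorem exists_consecutiveVisits_left {a b : ℕ} {x : M} (hab : a < b) (ha : f^[a] x ∈ V)
    (hb : f^[b] x ∈ V) : ∃ c, a ≤ c ∧ ConsecutiveVisits f V c b x := by
  classical
  let P := fun i => f^[i] x ∈ V
  refine ⟨Nat.findGreatest P (b - 1), Nat.le_findGreatest (by omega) ha,
    ?_, Nat.findGreatest_spec (P := P) (by omega) ha, hb, fun i hci hib =>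
      Nat.findGreatest_is_greatest hci (by omega)⟩
  have := Nat.findGreatest_le (P := P) (b - 1)
  omega

theorem exists_consecutiveVisits_right {a b : ℕ} {x : M} (hab : a < b) (ha : f^[a] x ∈ V)
    (hb : f^[b] x ∈ V) : ∃ c ≤ b, ConsecutiveVisits f V a c x := by
  classical
  have hex : ∃ i, a < i ∧ f^[i] x ∈ V := ⟨b, hab, hb⟩
  obtain ⟨hac, hc⟩ := Nat.find_spec hex
  exact ⟨Nat.find hex, Nat.find_min' hex ⟨hab, hb⟩, hac, ha, hc,
    fun i hai hic hi => Nat.find_min hex hic ⟨hai, hi⟩⟩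

theorem measurableSet_consecutiveVisits [MeasurableSpace M] (hf : Measurable f)
    (hV : MeasurableSet V) (a b : ℕ) : MeasurableSet {x | ConsecutiveVisits f V a b x} := by
  have hvisit : ∀ i, Measurable fun x => f^[i] x ∈ V := fun i =>
    measurableSet_setOfPred.1 ((hf.iterate i) hV)
  simp only [ConsecutiveVisits]
  exact measurableSet_setOfPred.2 <| measurable_const.and <| (hvisit a).and <| (hvisit b).and <|
    Measurable.forall fun i => measurable_const.imp <| measurable_const.imp (hvisit i).not

end Visits

theorem sum_range_slide {α : Type*} [AddCommMonoid α] (e : ℕ → α) (a n s : ℕ) :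
    ∑ i ∈ range n, e (a + s + i) + ∑ i ∈ range s, e (a + i) =
      ∑ i ∈ range n, e (a + i) + ∑ i ∈ range s, e (a + n + i) := by
  have hsn := sum_range_add (fun i => e (a + i)) s n
  have hns := sum_range_add (fun i => e (a + i)) n s
  simp only [← add_assoc] at hsn hns
  rw [add_comm, ← hsn, add_comm s n, hns]

section Counts

variable {M : Type*} {f : M → M} {V : Set M}

theorem sum_indicator_iterate_eq_one {a s : ℕ} {x : M}
    (h : ConsecutiveVisits f V a (a + s) x) :
    ∑ i ∈ range s, V.indicator (fun _ => 1) (f^[a + i] x) = 1 := by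
  obtain ⟨t, rfl⟩ : ∃ t, s = t + 1 := ⟨s - 1, by have := h.1; omega⟩
  rw [sum_range_succ', sum_eq_zero fun i hi => Set.indicator_of_notMem
    (h.2.2.2 (a + (i + 1)) (by omega) (by simp at hi; omega)) _]
  simp [h.2.1]

theorem sum_indicator_iterate_eq_zero {a s : ℕ} {x : M} (h : ∀ i < s, f^[a + i] x ∉ V) :
    ∑ i ∈ range s, V.indicator (fun _ => 1) (f^[a + i] x) = 0 :=
  sum_eq_zero fun i hi => Set.indicator_of_notMem (h i (mem_range.1 hi)) _

theorem Zminus_iterate_eq_sum_range (K s : ℕ) (x : M) :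
    Zminus f V K (f^[s] x) = ∑ i ∈ range K, V.indicator (fun _ => 1) (f^[s + i] x) := by
  refine sum_congr rfl fun i _ => ?_
  rw [add_comm, Function.iterate_add_apply]

theorem Zplus_eq_sum_range (K : ℕ) (x : M) :
    Zplus f V K x = ∑ i ∈ range (K + 1), V.indicator (fun _ => 1) (f^[K + i] x) := by
  rw [Zplus, ← Ico_add_one_right_eq_Icc, sum_Ico_eq_sum_range,
    show 2 * K + 1 - K = K + 1 by omega]

theorem Zminus_iterate {K s : ℕ} {x : M} (hK : ConsecutiveVisits f V K (K + s) x)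
    (hbefore : ∀ i < s, f^[i] x ∉ V) : Zminus f V K (f^[s] x) = Zminus f V K x + 1 := by
  have hslide := sum_range_slide (fun i => V.indicator (fun _ => 1) (f^[i] x)) 0 K s
  beta_reduce at hslide
  have hzero : ∑ i ∈ range s, V.indicator (fun _ => 1) (f^[0 + i] x) = 0 :=
    sum_indicator_iterate_eq_zero (by simpa using hbefore)
  have hone : ∑ i ∈ range s, V.indicator (fun _ => 1) (f^[0 + K + i] x) = 1 :=
    sum_indicator_iterate_eq_one (by simpa using hK)
  rw [hzero, hone, add_zero] at hslide
  simp only [zero_add] at hslide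
  rw [Zminus_iterate_eq_sum_range, hslide, Zminus]

theorem Zplus_iterate {K s : ℕ} {x : M} (hK : ConsecutiveVisits f V K (K + s) x)
    (hafter : ∀ i < s, f^[2 * K + 1 + i] x ∉ V) :
    Zplus f V K (f^[s] x) + 1 = Zplus f V K x := by
  have hslide := sum_range_slide (fun i => V.indicator (fun _ => 1) (f^[i] x)) K (K + 1) s
  beta_reduce at hslide
  have hone : ∑ i ∈ range s, V.indicator (fun _ => 1) (f^[K + i] x) = 1 :=
    sum_indicator_iterate_eq_one hK
  have hzero : ∑ i ∈ range s, V.indicator (fun _ => 1) (f^[K + (K + 1) + i] x) = 0 :=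
    sum_indicator_iterate_eq_zero (by simpa only [← two_mul, ← add_assoc] using hafter)
  rw [hone, hzero, add_zero] at hslide
  rw [Zplus_eq_sum_range, Zplus_eq_sum_range, ← hslide]
  congr 1
  refine sum_congr rfl fun i _ => ?_
  rw [← Function.iterate_add_apply, add_right_comm]

theorem exists_visit_lt_of_Zminus_ne_zero {K : ℕ} {x : M} (h : Zminus f V K x ≠ 0) :
    ∃ t < K, f^[t] x ∈ V := by
  obtain ⟨t, ht, hne⟩ := exists_ne_zero_of_sum_ne_zero h
  exact ⟨t, mem_range.1 ht, by_contra fun hv => hne (Set.indicator_of_notMem hv _)⟩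

theorem exists_visit_of_one_lt_Zplus {K : ℕ} {x : M} (h : 1 < Zplus f V K x) :
    ∃ t, K < t ∧ t ≤ 2 * K ∧ f^[t] x ∈ V := by
  by_contra! hnone
  have hsingle : Zplus f V K x = V.indicator (fun _ => 1) (f^[K] x) :=
    sum_eq_single_of_mem K (by simp; omega) fun t ht htK =>
      Set.indicator_of_notMem (hnone t (by simp at ht; omega) (by simp at ht; omega)) _
  have : V.indicator (fun _ => 1) (f^[K] x) ≤ 1 := Set.indicator_le_self' (by simp) _
  omega

theorem retCount_le (m : ℕ) (x : M) : retCount f V m x ≤ m := by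
  calc retCount f V m x ≤ (Icc 1 m).card • 1 :=
        sum_le_card_nsmul _ _ 1 fun i _ => Set.indicator_le_self' (by simp) _
    _ = m := by simp

variable [MeasurableSpace M]

theorem measurable_Zminus (hf : Measurable f) (hV : MeasurableSet V) (K : ℕ) :
    Measurable (Zminus f V K) :=
  Finset.measurable_sum _ fun i _ => (measurable_const.indicator hV).comp (hf.iterate i)

theorem measurable_Zplus (hf : Measurable f) (hV : MeasurableSet V) (K : ℕ) :
    Measurable (Zplus f V K) :=
  Finset.measurable_sum _ fun i _ => (measurable_const.indicator hV).comp (hf.iterate i)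

theorem measurable_retCount (hf : Measurable f) (hV : MeasurableSet V) (m : ℕ) :
    Measurable (retCount f V m) :=
  Finset.measurable_sum _ fun i _ => (measurable_const.indicator hV).comp (hf.iterate i)

end Counts

section Splits

variable {M : Type*} (f : M → M) (V : Set M) (K ℓ k : ℕ)

def clusterSplitSet : Set M :=
  {x | Zminus f V K x = k ∧ Zplus f V K x = ℓ - k ∧ f^[K] x ∈ V}

def farVisitSet : Set M :=
  {x | f^[K] x ∈ V ∧ ∃ t ≤ 3 * K, (t + K / 2 < K ∨ K + K / 2 < t) ∧ f^[t] x ∈ V}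

/-- The points `x` with consecutive visits at `K` and `K + s` for which `f^[s] x` has the split
`(k + 1, ℓ - k - 1)`. -/
def returnShiftSet : Set M :=
  ⋃ s ∈ Icc 1 K, f^[s] ⁻¹' (clusterSplitSet f V K ℓ (k + 1) ∩
    {y | ConsecutiveVisits f V (K - s) K y})

variable {f V K ℓ k}

theorem ConsecutiveVisits.no_edge_visits_of_not_mem_farVisitSet {s : ℕ} {x : M}
    (hx : x ∉ farVisitSet f V K) (h : ConsecutiveVisits f V K (K + s) x) (hs : s ≤ K) :
    (∀ i < s, f^[i] x ∉ V) ∧ ∀ i < s, f^[2 * K + 1 + i] x ∉ V := by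
  have hnear : ∀ t ≤ 3 * K, f^[t] x ∈ V → K ≤ t + K / 2 ∧ t ≤ K + K / 2 := fun t ht hv => by
    by_contra hfar
    exact hx ⟨h.2.1, t, ht, by omega, hv⟩
  have hsK := (hnear (K + s) (by omega) h.2.2.1).2
  refine ⟨fun i hi hv => ?_, fun i hi hv => ?_⟩
  · have := hnear i (by omega) hv
    omega
  · have := hnear _ (by omega) hv
    omega

theorem clusterSplitSet_eq_biUnion_consecutiveVisits (hk : k ≠ 0) :
    clusterSplitSet f V K ℓ k =
      ⋃ s ∈ Icc 1 K, clusterSplitSet f V K ℓ k ∩ {y | ConsecutiveVisits f V (K - s) K y} := by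
  refine subset_antisymm (fun x hx => ?_) (Set.iUnion₂_subset fun s _ => Set.inter_subset_left)
  obtain ⟨t, htK, ht⟩ := exists_visit_lt_of_Zminus_ne_zero (by rw [hx.1]; exact hk)
  obtain ⟨c, -, hc⟩ := exists_consecutiveVisits_left htK ht hx.2.2
  have hcK := hc.1
  refine Set.mem_biUnion (x := K - c) (by simp; omega) ⟨hx, ?_⟩
  rwa [Set.mem_ofPred_eq, Nat.sub_sub_self hcK.le]

theorem clusterSplitSet_subset_returnShiftSet_union (hkℓ : k + 1 < ℓ) :
    clusterSplitSet f V K ℓ k ⊆ returnShiftSet f V K ℓ k ∪ farVisitSet f V K := by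
  rintro x ⟨hminus, hplus, hK⟩
  by_cases hfar : x ∈ farVisitSet f V K
  · exact Or.inr hfar
  left
  obtain ⟨t, hKt, ht2K, ht⟩ := exists_visit_of_one_lt_Zplus (by omega : 1 < Zplus f V K x)
  obtain ⟨c, hct, hc⟩ := exists_consecutiveVisits_right hKt hK ht
  obtain ⟨s, rfl⟩ : ∃ s, c = K + s := ⟨c - K, by have := hc.1; omega⟩
  obtain ⟨hbefore, hafter⟩ := hc.no_edge_visits_of_not_mem_farVisitSet hfar (by omega)
  have hplus' := Zplus_iterate hc hafter
  refine Set.mem_biUnion (x := s) (by simp; have := hc.1; omega) ⟨⟨?_, ?_, ?_⟩, ?_⟩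
  · rw [Zminus_iterate hc hbefore, hminus]
  · omega
  · rw [← Function.iterate_add_apply]
    exact hc.2.2.1
  · exact (consecutiveVisits_iterate_sub (by omega)).2 hc

theorem returnShiftSet_subset_clusterSplitSet_union (hkℓ : k < ℓ) :
    returnShiftSet f V K ℓ k ⊆ clusterSplitSet f V K ℓ k ∪ farVisitSet f V K := by
  intro x hx
  by_cases hfar : x ∈ farVisitSet f V K
  · exact Or.inr hfar
  left
  simp only [returnShiftSet, Set.mem_iUnion, mem_Icc] at hx
  obtain ⟨s, ⟨-, hsK⟩, ⟨hminus, hplus, -⟩, hgap⟩ := hx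
  have hc := (consecutiveVisits_iterate_sub hsK).1 hgap
  obtain ⟨hbefore, hafter⟩ := hc.no_edge_visits_of_not_mem_farVisitSet hfar hsK
  have hplus' := Zplus_iterate hc hafter
  rw [Zminus_iterate hc hbefore] at hminus
  exact ⟨by omega, by omega, hc.2.1⟩

end Splits

theorem MeasureTheory.abs_measureReal_sub_le_of_subset_union {α : Type*} [MeasurableSpace α]
    {μ : Measure α} [IsFiniteMeasure μ] {s t u : Set α} (hst : s ⊆ t ∪ u) (hts : t ⊆ s ∪ u) :
    |μ.real s - μ.real t| ≤ μ.real u := by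
  have hs := (measureReal_mono (μ := μ) hst).trans (measureReal_union_le t u)
  have ht := (measureReal_mono (μ := μ) hts).trans (measureReal_union_le s u)
  rw [abs_sub_le_iff]
  constructor <;> linarith

theorem abs_sub_le_mul_of_abs_sub_succ_le {a : ℕ → ℝ} {c : ℝ} {ℓ : ℕ} (hc : 0 ≤ c)
    (h : ∀ i, i + 1 < ℓ → |a (i + 1) - a i| ≤ c) {k k' : ℕ} (hk : k < ℓ) (hk' : k' < ℓ) :
    |a k - a k'| ≤ ℓ * c := by
  wlog hkk' : k ≤ k' generalizing k k'
  · rw [abs_sub_comm]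
    exact this hk' hk (by omega)
  calc |a k - a k'| = dist (a k) (a k') := (Real.dist_eq _ _).symm
    _ ≤ ∑ i ∈ Ico k k', dist (a i) (a (i + 1)) := dist_le_Ico_sum_dist a hkk'
    _ ≤ ∑ i ∈ Ico k k', c := sum_le_sum fun i hi => by
      rw [dist_comm, Real.dist_eq]
      exact h i (by simp at hi; omega)
    _ = (k' - k : ℕ) * c := by simp
    _ ≤ ℓ * c := by gcongr; omega

section SplitMeasures

variable {M : Type*} [MeasurableSpace M] {μ : Measure M} {f : M → M} {V : Set M} {K ℓ k : ℕ}

theorem measurableSet_clusterSplitSet (hf : Measurable f) (hV : MeasurableSet V) (K ℓ k : ℕ) :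
    MeasurableSet (clusterSplitSet f V K ℓ k) :=
  (measurable_Zminus hf hV K (measurableSet_singleton k)).inter <|
    (measurable_Zplus hf hV K (measurableSet_singleton _)).inter ((hf.iterate K) hV)

theorem measure_returnShiftSet (hf : MeasurePreserving f μ μ) (hV : MeasurableSet V) :
    μ (returnShiftSet f V K ℓ k) = μ (clusterSplitSet f V K ℓ (k + 1)) := by
  set Q := fun s => clusterSplitSet f V K ℓ (k + 1) ∩ {y | ConsecutiveVisits f V (K - s) K y}
  have hQ : ∀ s, MeasurableSet (Q s) := fun s =>
    (measurableSet_clusterSplitSet hf.measurable hV K ℓ _).inter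
      (measurableSet_consecutiveVisits hf.measurable hV _ _)
  calc μ (returnShiftSet f V K ℓ k) = ∑ s ∈ Icc 1 K, μ (f^[s] ⁻¹' Q s) := by
        refine measure_biUnion_finset (fun s hs s' hs' hne => Set.disjoint_left.2 ?_)
          fun s _ => (hf.measurable.iterate s) (hQ s)
        intro x hx hx'
        simp only [coe_Icc, Set.mem_Icc] at hs hs'
        have h := (consecutiveVisits_iterate_sub hs.2).1 hx.2
        have h' := (consecutiveVisits_iterate_sub hs'.2).1 hx'.2
        exact hne (by have := h.right_unique h'; omega)
    _ = ∑ s ∈ Icc 1 K, μ (Q s) :=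
        sum_congr rfl fun s _ => (hf.iterate s).measure_preimage (hQ s).nullMeasurableSet
    _ = μ (clusterSplitSet f V K ℓ (k + 1)) := by
        rw [clusterSplitSet_eq_biUnion_consecutiveVisits k.succ_ne_zero]
        refine (measure_biUnion_finset (fun s hs s' hs' hne => Set.disjoint_left.2 ?_)
          fun s _ => hQ s).symm
        intro x hx hx'
        simp only [coe_Icc, Set.mem_Icc] at hs hs'
        exact hne (by have := hx.2.left_unique hx'.2; omega)

variable [IsFiniteMeasure μ]

theorem abs_measureReal_clusterSplitSet_succ_sub_le (hf : MeasurePreserving f μ μ)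
    (hV : MeasurableSet V) (hkℓ : k + 1 < ℓ) :
    |μ.real (clusterSplitSet f V K ℓ (k + 1)) - μ.real (clusterSplitSet f V K ℓ k)| ≤
      μ.real (farVisitSet f V K) := by
  rw [measureReal_def, ← measure_returnShiftSet hf hV, ← measureReal_def]
  exact abs_measureReal_sub_le_of_subset_union
    (returnShiftSet_subset_clusterSplitSet_union (by omega))
    (clusterSplitSet_subset_returnShiftSet_union hkℓ)

theorem abs_measureReal_clusterSplitSet_sub_le (hf : MeasurePreserving f μ μ)
    (hV : MeasurableSet V) {k k' : ℕ} (hk : k < ℓ) (hk' : k' < ℓ) :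
    |μ.real (clusterSplitSet f V K ℓ k) - μ.real (clusterSplitSet f V K ℓ k')| ≤
      ℓ * μ.real (farVisitSet f V K) :=
  abs_sub_le_mul_of_abs_sub_succ_le (a := fun k => μ.real (clusterSplitSet f V K ℓ k))
    measureReal_nonneg (fun _ hi => abs_measureReal_clusterSplitSet_succ_sub_le hf hV hi) hk hk'

end SplitMeasures

section Correlations
open scoped ENNReal

variable {M : Type*} [MeasurableSpace M] {μ : Measure M} {f : M → M} {V : Set M}

theorem measureReal_farVisitSet_le [IsFiniteMeasure μ] (hf : MeasurePreserving f μ μ)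
    (hV : MeasurableSet V) (K : ℕ) :
    μ.real (farVisitSet f V K) ≤ 2 * ∑ g ∈ Ioc (K / 2) (2 * K), μ.real (f^[g] ⁻¹' V ∩ V) := by
  set W := fun g => f^[g] ⁻¹' V ∩ V
  have hW : ∀ g, MeasurableSet (W g) := fun g => ((hf.measurable.iterate g) hV).inter hV
  have hsub : farVisitSet f V K ⊆
      (⋃ g ∈ Ioc (K / 2) (2 * K), f^[K - g] ⁻¹' W g) ∪
        ⋃ g ∈ Ioc (K / 2) (2 * K), f^[K] ⁻¹' W g := by
    rintro x ⟨hK, t, ht3K, hfar | hfar, ht⟩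
    · have htK : t ≤ K := by omega
      refine Or.inl (Set.mem_biUnion (x := K - t) (by simp; omega) ?_)
      rw [Set.mem_preimage, Nat.sub_sub_self htK]
      refine ⟨?_, ht⟩
      rwa [Set.mem_preimage, ← Function.iterate_add_apply, Nat.sub_add_cancel htK]
    · refine Or.inr (Set.mem_biUnion (x := t - K) (by simp; omega) ⟨?_, hK⟩)
      rwa [Set.mem_preimage, ← Function.iterate_add_apply, Nat.sub_add_cancel (by omega)]
  have hpre : ∀ n g, μ.real (f^[n] ⁻¹' W g) = μ.real (W g) := fun n g =>
    (hf.iterate n).measureReal_preimage (hW g).nullMeasurableSet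
  calc μ.real (farVisitSet f V K)
      ≤ ∑ g ∈ Ioc (K / 2) (2 * K), μ.real (f^[K - g] ⁻¹' W g) +
          ∑ g ∈ Ioc (K / 2) (2 * K), μ.real (f^[K] ⁻¹' W g) :=
        (measureReal_mono hsub).trans <| (measureReal_union_le _ _).trans <|
          add_le_add (measureReal_biUnion_finset_le _ _) (measureReal_biUnion_finset_le _ _)
    _ = 2 * ∑ g ∈ Ioc (K / 2) (2 * K), μ.real (W g) := by simp only [hpre, two_mul]

theorem lintegral_natCast_eq_sum_measure_lt {α : Type*} [MeasurableSpace α] {ν : Measure α}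
    {N : α → ℕ} (hN : Measurable N) {m : ℕ} (hm : ∀ x, N x ≤ m) :
    ∫⁻ x, (N x : ℝ≥0∞) ∂ν = ∑ j ∈ range m, ν {x | j < N x} := by
  have hmeas : ∀ j, MeasurableSet {x | j < N x} := fun j => hN measurableSet_Ioi
  have hpt : ∀ x, (N x : ℝ≥0∞) = ∑ j ∈ range m, {x | j < N x}.indicator 1 x := fun x => by
    have hfilter : (range m).filter (· < N x) = range (N x) := by
      ext j
      simp only [mem_filter, mem_range]
      have := hm x
      omega
    simp only [Set.indicator_apply, Set.mem_ofPred_eq, Pi.one_apply, sum_boole, hfilter,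
      card_range]
  simp_rw [hpt]
  rw [lintegral_finsetSum _ fun j _ => measurable_one.indicator (hmeas j)]
  exact sum_congr rfl fun j _ => lintegral_indicator_one (hmeas j)

theorem setLIntegral_retCount (hf : Measurable f) (hV : MeasurableSet V) (m : ℕ) :
    ∫⁻ x in V, (retCount f V m x : ℝ≥0∞) ∂μ = ∑ g ∈ Icc 1 m, μ (f^[g] ⁻¹' V ∩ V) := by
  have hpt : ∀ x, (retCount f V m x : ℝ≥0∞) = ∑ g ∈ Icc 1 m, (f^[g] ⁻¹' V).indicator 1 x :=
    fun x => by
      rw [retCount, Nat.cast_sum]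
      refine sum_congr rfl fun g _ => ?_
      by_cases h : f^[g] x ∈ V <;> simp [h]
  simp_rw [hpt]
  rw [lintegral_finsetSum _ fun g _ => measurable_one.indicator ((hf.iterate g) hV)]
  refine sum_congr rfl fun g _ => ?_
  rw [lintegral_indicator_one ((hf.iterate g) hV), Measure.restrict_apply ((hf.iterate g) hV)]

end Correlations

section ExpectedReturns

variable {M : Type*} [MeasurableSpace M] (μ : Measure M) (f : M → M) (V : Set M)

/-- `condRet μ f V m (j + 2)` is `μ_V (j < retCount f V m)`, so this is the mean number of
returns to `V` within time `m` under `μ_V`. -/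
noncomputable def expectedReturns (m : ℕ) : ℝ :=
  ∑ j ∈ range m, condRet μ f V m (j + 2)

variable {μ f V}

theorem condRet_nonneg (m ℓ : ℕ) : 0 ≤ condRet μ f V m ℓ :=
  div_nonneg measureReal_nonneg measureReal_nonneg

theorem condRet_mono [IsFiniteMeasure μ] (ℓ : ℕ) : Monotone fun m => condRet μ f V m ℓ :=
  fun m m' hmm' => div_le_div_of_nonneg_right (measureReal_mono (Set.inter_subset_inter_right _
    fun x (hx : ℓ - 1 ≤ retCount f V m x) =>
      hx.trans (sum_le_sum_of_subset (Icc_subset_Icc_right hmm')))) measureReal_nonneg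

variable [IsFiniteMeasure μ]

theorem measureReal_mul_condRet (m ℓ : ℕ) :
    μ.real V * condRet μ f V m ℓ = μ.real (V ∩ {x | ℓ - 1 ≤ retCount f V m x}) := by
  rcases eq_or_ne (μ.real V) 0 with h | h
  · rw [h, zero_mul, eq_comm]
    exact measureReal_mono_null Set.inter_subset_left h
  · exact mul_div_cancel₀ _ h

theorem measureReal_mul_expectedReturns (hf : Measurable f) (hV : MeasurableSet V) (m : ℕ) :
    μ.real V * expectedReturns μ f V m = ∑ g ∈ Icc 1 m, μ.real (f^[g] ⁻¹' V ∩ V) := by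
  have hlayer := setLIntegral_retCount (μ := μ) hf hV m
  rw [lintegral_natCast_eq_sum_measure_lt (measurable_retCount hf hV m) (retCount_le m)] at hlayer
  calc μ.real V * expectedReturns μ f V m
      = ∑ j ∈ range m, μ.real (V ∩ {x | j + 2 - 1 ≤ retCount f V m x}) := by
        simp only [expectedReturns, mul_sum, measureReal_mul_condRet]
    _ = (∑ j ∈ range m, μ.restrict V {x | j < retCount f V m x}).toReal := by
        rw [ENNReal.toReal_sum fun j _ => measure_ne_top _ _]
        refine sum_congr rfl fun j _ => ?_
        have hmeas : MeasurableSet {x | j < retCount f V m x} :=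
          measurable_retCount hf hV m measurableSet_Ioi
        rw [Measure.restrict_apply hmeas, Set.inter_comm]
        rfl
    _ = ∑ g ∈ Icc 1 m, μ.real (f^[g] ⁻¹' V ∩ V) := by
        rw [hlayer, ENNReal.toReal_sum fun g _ => measure_ne_top _ _]
        rfl

theorem measureReal_farVisitSet_le_expectedReturns (hf : MeasurePreserving f μ μ)
    (hV : MeasurableSet V) (K : ℕ) :
    μ.real (farVisitSet f V K) ≤
      2 * μ.real V * (expectedReturns μ f V (2 * K) - expectedReturns μ f V (K / 2)) := by
  have hIoc : ∀ m, Icc 1 m = Ioc 0 m := fun m => Icc_add_one_left_eq_Ioc 0 m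
  have hsplit := sum_Ioc_consecutive (fun g => μ.real (f^[g] ⁻¹' V ∩ V)) (Nat.zero_le (K / 2))
    (by omega : K / 2 ≤ 2 * K)
  rw [mul_assoc, mul_sub, measureReal_mul_expectedReturns hf.measurable hV,
    measureReal_mul_expectedReturns hf.measurable hV, hIoc, hIoc, ← hsplit, add_sub_cancel_left]
  exact measureReal_farVisitSet_le hf hV K

end ExpectedReturns

theorem tendsto_sum_range_of_dominated {a : ℕ → ℕ → ℝ} {b bound : ℕ → ℝ}
    (h_sum : Summable bound) (hab : ∀ j, Tendsto (a · j) atTop (𝓝 (b j)))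
    (h_bound : ∀ᶠ m in atTop, ∀ j, |a m j| ≤ bound j) :
    Tendsto (fun m => ∑ j ∈ range m, a m j) atTop (𝓝 (∑' j, b j)) := by
  have htrunc := tendsto_tsum_of_dominated_convergence (f := fun m j => if j < m then a m j else 0)
    h_sum (fun j => (hab j).congr' ((eventually_gt_atTop j).mono fun m hm => by simp [hm]))
    (h_bound.mono fun m hm j => by
      split_ifs
      · exact hm j
      · simpa using (abs_nonneg _).trans (hm j))
  refine htrunc.congr fun m => ?_
  rw [tsum_eq_sum (s := range m) fun j hj => if_neg (by simpa using hj)]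
  exact sum_congr rfl fun j hj => if_pos (mem_range.1 hj)

theorem tendsto_sum_range_of_monotone_limits {c : ℕ → ℕ → ℕ → ℝ} {A : ℕ → ℕ → ℝ} {α : ℕ → ℝ}
    {K₀ : ℕ} (hc0 : ∀ n m j, 0 ≤ c n m j) (hcmono : ∀ n j, Monotone fun m => c n m j)
    (hA : ∀ j, 1 ≤ j → ∀ m, K₀ ≤ m → Tendsto (fun n => c n m j) atTop (𝓝 (A j m)))
    (hα : ∀ j, 1 ≤ j → Tendsto (A j) atTop (𝓝 (α j)))
    (hsum : Summable fun j : ℕ => (j : ℝ) * α j) :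
    Tendsto (fun m => ∑ j ∈ range m, A (j + 2) m) atTop (𝓝 (∑' j, α (j + 2))) := by
  have hA0 : ∀ j, 1 ≤ j → ∀ m, K₀ ≤ m → 0 ≤ A j m := fun j hj m hm =>
    ge_of_tendsto' (hA j hj m hm) fun n => hc0 n m j
  have hAα : ∀ j, 1 ≤ j → ∀ m, K₀ ≤ m → A j m ≤ α j := fun j hj m hm =>
    ge_of_tendsto (hα j hj) <| eventually_atTop.2 ⟨m, fun m' hm' =>
      le_of_tendsto_of_tendsto' (hA j hj m hm) (hA j hj m' (hm.trans hm'))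
        fun n => hcmono n j hm'⟩
  have hα0 : ∀ j, 1 ≤ j → 0 ≤ α j := fun j hj => (hA0 j hj K₀ le_rfl).trans (hAα j hj K₀ le_rfl)
  have hsum2 : Summable fun j => α (j + 2) :=
    ((summable_nat_add_iff 2).2 hsum).of_nonneg_of_le (fun j => hα0 _ (by omega))
      fun j => le_mul_of_one_le_left (hα0 _ (by omega)) (by norm_cast; omega)
  exact tendsto_sum_range_of_dominated hsum2 (fun j => hα (j + 2) (by omega))
    (eventually_atTop.2 ⟨K₀, fun m hm j =>
      abs_le.2 ⟨by linarith [hA0 (j + 2) (by omega) m hm, hα0 (j + 2) (by omega)],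
        hAα _ (by omega) m hm⟩⟩)

theorem eventually_expectedReturns_sub_lt {M : Type*} [MeasurableSpace M] {μ : Measure M}
    [IsFiniteMeasure μ] {f : M → M} {U : ℕ → Set M} {K₀ : ℕ} {A : ℕ → ℕ → ℝ} {α : ℕ → ℝ}
    (hA : ∀ ℓ, 1 ≤ ℓ → ∀ K, K₀ ≤ K →
        Tendsto (fun n => condRet μ f (U n) K ℓ) atTop (𝓝 (A ℓ K)))
    (hα : ∀ ℓ, 1 ≤ ℓ → Tendsto (A ℓ) atTop (𝓝 (α ℓ)))
    (hsum : Summable fun ℓ : ℕ => (ℓ : ℝ) * α ℓ) {ε : ℝ} (hε : 0 < ε) :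
    ∀ᶠ K in atTop, ∀ᶠ n in atTop,
      expectedReturns μ f (U n) (2 * K) - expectedReturns μ f (U n) (K / 2) < ε := by
  set G : ℕ → ℝ := fun m => ∑ j ∈ range m, A (j + 2) m
  have hG : Tendsto G atTop (𝓝 (∑' j, α (j + 2))) :=
    tendsto_sum_range_of_monotone_limits (fun _ _ _ => condRet_nonneg _ _)
      (fun _ j => condRet_mono j) hA hα hsum
  have hgap : Tendsto (fun K => G (2 * K) - G (K / 2)) atTop (𝓝 0) := by
    simpa using (hG.comp (tendsto_id.const_mul_atTop' two_pos)).sub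
      (hG.comp (Nat.tendsto_div_const_atTop two_ne_zero))
  filter_upwards [hgap.eventually (gt_mem_nhds hε), eventually_ge_atTop (2 * K₀)] with K hGK hK₀
  have hE : Tendsto (fun n => expectedReturns μ f (U n) (2 * K) -
      expectedReturns μ f (U n) (K / 2)) atTop (𝓝 (G (2 * K) - G (K / 2))) :=
    (tendsto_finsetSum _ fun j _ => hA _ (by omega) _ (by omega)).sub
      (tendsto_finsetSum _ fun j _ => hA _ (by omega) _ (by omega))
  exact hE.eventually (gt_mem_nhds hGK)

theorem cluster_split_near_invariance_general
    {M : Type*} [MeasurableSpace M] (μ : Measure M) [IsProbabilityMeasure μ]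
    (f : M → M) (hf : MeasurePreserving f μ μ)
    (U : ℕ → Set M) (hmeas : ∀ n, MeasurableSet (U n))
    (K₀ : ℕ) (A : ℕ → ℕ → ℝ)
    (hA : ∀ ℓ, 1 ≤ ℓ → ∀ K, K₀ ≤ K →
        Tendsto (fun n => condRet μ f (U n) K ℓ) atTop (nhds (A ℓ K)))
    (hatα : ℕ → ℝ)
    (hhatα : ∀ ℓ, 1 ≤ ℓ → Tendsto (fun K => A ℓ K) atTop (nhds (hatα ℓ)))
    (hsum : Summable (fun ℓ : ℕ => (ℓ : ℝ) * hatα ℓ)) :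
    ∀ η : ℝ, 0 < η → ∀ ℓ : ℕ, 1 ≤ ℓ → ∃ Kc : ℕ, ∀ K, Kc ≤ K → ∃ n₀, ∀ n ≥ n₀,
      ∀ k k' : ℕ, k < ℓ → k' < ℓ →
        |(μ {x | Zminus f (U n) K x = k ∧ Zplus f (U n) K x = ℓ - k ∧ f^[K] x ∈ U n}).toReal -
          (μ {x | Zminus f (U n) K x = k' ∧ Zplus f (U n) K x = ℓ - k' ∧ f^[K] x ∈ U n}).toReal|
        ≤ η * (μ (U n)).toReal := by
  intro η hη ℓ hℓ
  obtain ⟨Kc, hKc⟩ := eventually_atTop.1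
    (eventually_expectedReturns_sub_lt hA hhatα hsum (by positivity : 0 < η / (2 * ℓ)))
  refine ⟨Kc, fun K hK => ?_⟩
  obtain ⟨n₀, hn₀⟩ := eventually_atTop.1 (hKc K hK)
  refine ⟨n₀, fun n hn k k' hk hk' => ?_⟩
  have hsmall := (lt_div_iff₀ (by positivity)).1 (hn₀ n hn)
  calc _ ≤ ℓ * μ.real (farVisitSet f (U n) K) :=
        abs_measureReal_clusterSplitSet_sub_le hf (hmeas n) hk hk'
    _ ≤ ℓ * (2 * μ.real (U n) * (expectedReturns μ f (U n) (2 * K) -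
          expectedReturns μ f (U n) (K / 2))) := by
        gcongr
        exact measureReal_farVisitSet_le_expectedReturns hf (hmeas n) K
    _ ≤ η * μ.real (U n) := by nlinarith [measureReal_nonneg (μ := μ) (s := U n)]

/-- Conditioned on an entry at the center time `K` of a cluster of
length `2K+1`, the probability of a given split of the `ℓ` entries is nearly independent
of the split: the measures of the events `{Z^{K,-} = k, Z^{K,+} = ℓ-k, f^K x ∈ U_n}` for
different `k, k' < ℓ` differ by at most `η·μ(U_n)` for `K` and `n` large. -/
theorem cluster_split_near_invariance
    {M : Type*} [MeasurableSpace M] (μ : Measure M) [IsProbabilityMeasure μ]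
    (f : M → M) (hf : MeasurePreserving f μ μ)
    (U : ℕ → Set M) (hmeas : ∀ n, MeasurableSet (U n))
    (hnested : ∀ n, U (n + 1) ⊆ U n) (hpos : ∀ n, 0 < μ (U n))
    (hto0 : Tendsto (fun n => μ (U n)) atTop (nhds 0))
    (K₀ : ℕ) (A : ℕ → ℕ → ℝ)
    (hA : ∀ ℓ, 1 ≤ ℓ → ∀ K, K₀ ≤ K →
        Tendsto (fun n => condRet μ f (U n) K ℓ) atTop (nhds (A ℓ K)))
    (hatα : ℕ → ℝ)
    (hhatα : ∀ ℓ, 1 ≤ ℓ → Tendsto (fun K => A ℓ K) atTop (nhds (hatα ℓ)))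
    (hsum : Summable (fun ℓ : ℕ => (ℓ : ℝ) * hatα ℓ)) :
    ∀ η : ℝ, 0 < η → ∀ ℓ : ℕ, 1 ≤ ℓ → ∃ Kc : ℕ, ∀ K, Kc ≤ K → ∃ n₀, ∀ n ≥ n₀,
      ∀ k k' : ℕ, k < ℓ → k' < ℓ →
        |(μ {x | Zminus f (U n) K x = k ∧ Zplus f (U n) K x = ℓ - k ∧ f^[K] x ∈ U n}).toReal -
          (μ {x | Zminus f (U n) K x = k' ∧ Zplus f (U n) K x = ℓ - k' ∧ f^[K] x ∈ U n}).toReal|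
        ≤ η * (μ (U n)).toReal :=
  cluster_split_near_invariance_general μ f hf U hmeas K₀ A hA hatα hhatα hsum
end

section
/- Let (M, ℬ, μ, f) be a measure-preserving system and let {U_n}, {V_n} be nested sequences of measurable sets with μ(U_n) > 0 and μ(V_n) > 0 for each n (V_n not necessarily contained in U_n), such that μ(U_n △ V_n)/μ(U_n) → 0 as n → ∞, where △ denotes symmetric difference. Then for every fixed K ≥ 1 and ℓ ≥ 1, μ_{U_n}(τ_{U_n}^{ℓ−1} ≤ K) − μ_{V_n}(τ_{V_n}^{ℓ−1} ≤ K) → 0 as n → ∞; consequently, whenever the iterated limits α̂_ℓ^U = lim_{K→∞} lim_{n→∞} μ_{U_n}(τ_{U_n}^{ℓ−1} ≤ K) and α̂_ℓ^V = lim_{K→∞} lim_{n→∞} μ_{V_n}(τ_{V_n}^{ℓ−1} ≤ K) exist, they coincide for all ℓ ≥ 1. -/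
open MeasureTheory Filter Topology

lemma event_diff_subset {M : Type*} (f : M → M) (U V : Set M) (K ℓ : ℕ) :
    (U ∩ {x | ℓ - 1 ≤ retCount f U K x}) \ (V ∩ {x | ℓ - 1 ≤ retCount f V K x}) ⊆
      ⋃ i ∈ Finset.Icc 0 K, f^[i] ⁻¹' ((U \ V) ∪ (V \ U)) := by
  classical
  intro x hx
  obtain ⟨⟨hxU, hxret⟩, hnot⟩ := hx
  by_cases hxV : x ∈ V
  · by_contra hcon
    simp only [Set.mem_iUnion, not_exists, Set.mem_preimage] at hcon
    have heq : retCount f U K x = retCount f V K x := by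
      unfold retCount
      refine Finset.sum_congr rfl fun i hi => ?_
      have hi0 : i ∈ Finset.Icc 0 K :=
        Finset.mem_Icc.mpr ⟨Nat.zero_le _, (Finset.mem_Icc.mp hi).2⟩
      have hS := hcon i hi0
      have hiff : f^[i] x ∈ U ↔ f^[i] x ∈ V := by
        by_contra h
        simp only [Set.mem_union, Set.mem_diff] at hS
        tauto
      rw [Set.indicator_apply, Set.indicator_apply]
      exact if_congr hiff rfl rfl
    exact hnot ⟨hxV, by simpa [← heq] using hxret⟩
  · refine Set.mem_iUnion₂.mpr ⟨0, Finset.mem_Icc.mpr ⟨le_rfl, Nat.zero_le _⟩, ?_⟩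
    simp only [Function.iterate_zero, id, Set.mem_preimage]
    exact Or.inl ⟨hxU, hxV⟩

lemma event_measure_le {M : Type*} [MeasurableSpace M] (μ : Measure M)
    (f : M → M) (hf : MeasurePreserving f μ μ) (U V : Set M)
    (hU : MeasurableSet U) (hV : MeasurableSet V) (K ℓ : ℕ) :
    μ (U ∩ {x | ℓ - 1 ≤ retCount f U K x}) ≤
      μ (V ∩ {x | ℓ - 1 ≤ retCount f V K x}) + (K + 1) * μ ((U \ V) ∪ (V \ U)) := by
  set EU := U ∩ {x | ℓ - 1 ≤ retCount f U K x}
  set EV := V ∩ {x | ℓ - 1 ≤ retCount f V K x}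
  have hsub : EU ⊆ EV ∪ (EU \ EV) := fun x hx => by
    by_cases h : x ∈ EV
    · exact Or.inl h
    · exact Or.inr ⟨hx, h⟩
  calc μ EU ≤ μ (EV ∪ (EU \ EV)) := measure_mono hsub
    _ ≤ μ EV + μ (EU \ EV) := measure_union_le _ _
    _ ≤ μ EV + (K + 1) * μ ((U \ V) ∪ (V \ U)) := by
        gcongr
        calc μ (EU \ EV) ≤ μ (⋃ i ∈ Finset.Icc 0 K, f^[i] ⁻¹' ((U \ V) ∪ (V \ U))) :=
              measure_mono (event_diff_subset f U V K ℓ)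
          _ ≤ ∑ i ∈ Finset.Icc 0 K, μ (f^[i] ⁻¹' ((U \ V) ∪ (V \ U))) :=
              measure_biUnion_finset_le _ _
          _ = ∑ i ∈ Finset.Icc 0 K, μ ((U \ V) ∪ (V \ U)) := by
              refine Finset.sum_congr rfl fun i _ => ?_
              exact (hf.iterate i).measure_preimage
                (((hU.diff hV).union (hV.diff hU)).nullMeasurableSet)
          _ = (K + 1) * μ ((U \ V) ∪ (V \ U)) := by
              rw [Finset.sum_const, Nat.card_Icc]
              simp [nsmul_eq_mul]

/-- If `{U n}` and `{V n}` are nested sequences (with `V n` not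
necessarily contained in `U n`) whose symmetric differences satisfy
`μ(U n △ V n)/μ(U n) → 0`, then for each fixed `K ≥ 1` and `ℓ ≥ 1` the difference of
the conditional return probabilities tends to `0`; consequently the iterated limits
`α̂_ℓ^U` and `α̂_ℓ^V`, whenever they exist, coincide for all `ℓ ≥ 1`. -/
theorem hatAlpha_symmDiff_approximation
    {M : Type*} [MeasurableSpace M] (μ : Measure M) [IsProbabilityMeasure μ]
    (f : M → M) (hf : MeasurePreserving f μ μ)
    (U V : ℕ → Set M) (hUmeas : ∀ n, MeasurableSet (U n)) (hVmeas : ∀ n, MeasurableSet (V n))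
    (hUnested : ∀ n, U (n + 1) ⊆ U n) (hVnested : ∀ n, V (n + 1) ⊆ V n)
    (hUpos : ∀ n, 0 < μ (U n)) (hVpos : ∀ n, 0 < μ (V n))
    (hratio : Tendsto (fun n =>
        (μ ((U n \ V n) ∪ (V n \ U n))).toReal / (μ (U n)).toReal) atTop (nhds 0)) :
    (∀ K ℓ : ℕ, 1 ≤ K → 1 ≤ ℓ →
        Tendsto (fun n => condRet μ f (U n) K ℓ - condRet μ f (V n) K ℓ) atTop (nhds 0)) ∧
    (∀ (ℓ : ℕ), 1 ≤ ℓ → ∀ (AU AV : ℕ → ℝ) (aU aV : ℝ),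
        (∀ K, 1 ≤ K → Tendsto (fun n => condRet μ f (U n) K ℓ) atTop (nhds (AU K))) →
        (∀ K, 1 ≤ K → Tendsto (fun n => condRet μ f (V n) K ℓ) atTop (nhds (AV K))) →
        Tendsto AU atTop (nhds aU) → Tendsto AV atTop (nhds aV) → aU = aV) := by
  have main : ∀ K ℓ : ℕ,
      Tendsto (fun n => condRet μ f (U n) K ℓ - condRet μ f (V n) K ℓ) atTop (nhds 0) := by
    intro K ℓ
    have hbound : ∀ n, |condRet μ f (U n) K ℓ - condRet μ f (V n) K ℓ| ≤
        ((K : ℝ) + 2) * ((μ ((U n \ V n) ∪ (V n \ U n))).toReal / (μ (U n)).toReal) := by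
      intro n
      set S := (U n \ V n) ∪ (V n \ U n) with hS
      set a := (μ (U n ∩ {x | ℓ - 1 ≤ retCount f (U n) K x})).toReal with ha
      set b := (μ (V n ∩ {x | ℓ - 1 ≤ retCount f (V n) K x})).toReal with hb
      set u := (μ (U n)).toReal with hu
      set v := (μ (V n)).toReal with hv
      set e := (μ S).toReal with he
      have hfin : ∀ A : Set M, μ A ≠ ⊤ := fun A => measure_ne_top μ A
      have hu0 : 0 < u := ENNReal.toReal_pos (hUpos n).ne' (hfin _)
      have hv0 : 0 < v := ENNReal.toReal_pos (hVpos n).ne' (hfin _)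
      have he0 : 0 ≤ e := ENNReal.toReal_nonneg
      -- |a - b| ≤ (K+1) e
      have hab : |a - b| ≤ ((K : ℝ) + 1) * e := by
        rw [abs_sub_le_iff]
        constructor
        · have h := event_measure_le μ f hf (U n) (V n) (hUmeas n) (hVmeas n) K ℓ
          have := ENNReal.toReal_mono (by
            exact ENNReal.add_ne_top.mpr ⟨hfin _, ENNReal.mul_ne_top (by simp) (hfin _)⟩) h
          rw [ENNReal.toReal_add (hfin _) (ENNReal.mul_ne_top (by simp) (hfin _)),
            ENNReal.toReal_mul] at this
          have hc : ((K : ENNReal) + 1).toReal = (K : ℝ) + 1 := by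
            rw [ENNReal.toReal_add (by simp) (by simp)]; simp
          rw [hc] at this
          linarith [this]
        · have hS' : (V n \ U n) ∪ (U n \ V n) = S := Set.union_comm _ _
          have h := event_measure_le μ f hf (V n) (U n) (hVmeas n) (hUmeas n) K ℓ
          rw [hS'] at h
          have := ENNReal.toReal_mono (by
            exact ENNReal.add_ne_top.mpr ⟨hfin _, ENNReal.mul_ne_top (by simp) (hfin _)⟩) h
          rw [ENNReal.toReal_add (hfin _) (ENNReal.mul_ne_top (by simp) (hfin _)),
            ENNReal.toReal_mul] at this
          have hc : ((K : ENNReal) + 1).toReal = (K : ℝ) + 1 := by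
            rw [ENNReal.toReal_add (by simp) (by simp)]; simp
          rw [hc] at this
          linarith [this]
      -- |u - v| ≤ e
      have huv : |u - v| ≤ e := by
        rw [abs_sub_le_iff]
        constructor
        · have h : μ (U n) ≤ μ (V n) + μ S := by
            calc μ (U n) ≤ μ (V n ∪ (U n \ V n)) := measure_mono fun x hx => by
                  by_cases h : x ∈ V n
                  · exact Or.inl h
                  · exact Or.inr ⟨hx, h⟩
              _ ≤ μ (V n) + μ (U n \ V n) := measure_union_le _ _
              _ ≤ μ (V n) + μ S := by gcongr; exact fun x hx => Or.inl hx
          have := ENNReal.toReal_mono (ENNReal.add_ne_top.mpr ⟨hfin _, hfin _⟩) h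
          rw [ENNReal.toReal_add (hfin _) (hfin _)] at this
          linarith
        · have h : μ (V n) ≤ μ (U n) + μ S := by
            calc μ (V n) ≤ μ (U n ∪ (V n \ U n)) := measure_mono fun x hx => by
                  by_cases h : x ∈ U n
                  · exact Or.inl h
                  · exact Or.inr ⟨hx, h⟩
              _ ≤ μ (U n) + μ (V n \ U n) := measure_union_le _ _
              _ ≤ μ (U n) + μ S := by gcongr; exact fun x hx => Or.inr hx
          have := ENNReal.toReal_mono (ENNReal.add_ne_top.mpr ⟨hfin _, hfin _⟩) h
          rw [ENNReal.toReal_add (hfin _) (hfin _)] at this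
          linarith
      have hblev : b ≤ v := ENNReal.toReal_mono (hfin _) (measure_mono Set.inter_subset_left)
      have hb0 : 0 ≤ b := ENNReal.toReal_nonneg
      have key : |a / u - b / v| ≤ (|a - b| + |u - v|) / u := by
        have hsplit : a / u - b / v = (a - b) / u + (b / v) * ((v - u) / u) := by
          field_simp
          ring
        rw [hsplit]
        have hbv : b / v ≤ 1 := div_le_one_of_le₀ hblev hv0.le
        have hbv0 : 0 ≤ b / v := div_nonneg hb0 hv0.le
        calc |(a - b) / u + (b / v) * ((v - u) / u)|
            ≤ |(a - b) / u| + |(b / v) * ((v - u) / u)| := abs_add_le _ _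
          _ = |a - b| / u + (b / v) * (|v - u| / u) := by
              simp only [abs_div, abs_mul, abs_of_pos hu0, abs_of_pos hv0,
                abs_of_nonneg hb0]
          _ ≤ |a - b| / u + 1 * (|v - u| / u) := by
              have hX : (0:ℝ) ≤ |v - u| / u := div_nonneg (abs_nonneg _) hu0.le
              nlinarith
          _ = (|a - b| + |u - v|) / u := by rw [abs_sub_comm v u]; ring
      have : condRet μ f (U n) K ℓ - condRet μ f (V n) K ℓ = a / u - b / v := rfl
      rw [this]
      calc |a / u - b / v| ≤ (|a - b| + |u - v|) / u := key
        _ ≤ (((K : ℝ) + 1) * e + e) / u := by gcongr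
        _ = ((K : ℝ) + 2) * (e / u) := by ring
    have htend : Tendsto (fun n => ((K : ℝ) + 2) *
        ((μ ((U n \ V n) ∪ (V n \ U n))).toReal / (μ (U n)).toReal)) atTop (nhds 0) := by
      simpa using hratio.const_mul ((K : ℝ) + 2)
    exact squeeze_zero_norm hbound htend
  refine ⟨fun K ℓ _ _ => main K ℓ, ?_⟩
  intro ℓ hℓ AU AV aU aV hAU hAV haU haV
  have hKeq : ∀ K, 1 ≤ K → AU K = AV K := by
    intro K hK
    have h1 : Tendsto (fun n => condRet μ f (U n) K ℓ) atTop (nhds (AV K)) := by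
      have := (main K ℓ).add (hAV K hK)
      simpa using this
    exact tendsto_nhds_unique (hAU K hK) h1
  have hEq : AU =ᶠ[atTop] AV := eventually_atTop.mpr ⟨1, hKeq⟩
  exact tendsto_nhds_unique (haU.congr' hEq) haV
end
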